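/- arXiv:2604.11319 — 6 statements merged into one kernel-verified Lean document; each statement's English description precedes it below -/
import Mathlib

section
/- Let u, v ∈ ℝ² with det(u, v − u) ≠ 0 and let A_{uv}(z) = z + (det(z, v − u)/det(u, v − u))·(v − u) be the associated shear map. If x, y ∈ ℝ² satisfy A_{uv}(x) = y and det(x, y) ≠ 0, then A_{uv} = A_{xy}; that is, A_{uv}(z) = z + (det(z, y − x)/det(x, y − x))·(y − x) for all z ∈ ℝ². -/
/-! Writing `A_{uv}(z) = z + (det(z, w) / d) • w` with `w = v - u` and `d = det(u, w)`, the map is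
unchanged under `(w, d) ↦ (c • w, c² d)` for `c ≠ 0`. The hypothesis `A_{uv}(x) = y` says
`y - x = c • w` with `det(x, w) = c d`, hence `det(x, y - x) = c² d`; and `c ≠ 0` because
`c = 0` would give `y = x`, contradicting `det(x, y) ≠ 0`. -/

/-- The standard 2×2 determinant on `ℝ × ℝ`. -/
noncomputable def det2 (x y : ℝ × ℝ) : ℝ := x.1 * y.2 - x.2 * y.1

/-- The shear map `A_{uv}(x) = x + (det(x, v−u)/det(u, v−u)) • (v−u)`. -/
noncomputable def shear (u v : ℝ × ℝ) (x : ℝ × ℝ) : ℝ × ℝ :=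
  x + (det2 x (v - u) / det2 u (v - u)) • (v - u)

lemma det2_self (x : ℝ × ℝ) : det2 x x = 0 := by
  rw [det2]; ring

lemma det2_smul_right (c : ℝ) (x w : ℝ × ℝ) : det2 x (c • w) = c * det2 x w := by
  simp only [det2, Prod.smul_fst, Prod.smul_snd, smul_eq_mul]; ring

lemma shear_sub_self (u v z : ℝ × ℝ) :
    shear u v z - z = (det2 z (v - u) / det2 u (v - u)) • (v - u) :=
  add_sub_cancel_left _ _

lemma shear_eq_of_sub_eq_smul {u v x y : ℝ × ℝ} {c : ℝ} (hc : c ≠ 0)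
    (hyx : y - x = c • (v - u)) (hx : det2 x (v - u) = c * det2 u (v - u)) :
    shear x y = shear u v := by
  funext z
  rw [shear, shear, hyx, det2_smul_right, det2_smul_right, hx, smul_smul,
    mul_div_mul_left _ _ hc, div_mul_eq_mul_div, mul_comm _ c, mul_div_mul_left _ _ hc]

/-- if `A_{uv}(x) = y` with `det(x, y) ≠ 0` then `A_{uv} = A_{xy}`. -/
theorem stmt_3 (u v x y : ℝ × ℝ) (huv : det2 u (v - u) ≠ 0)
    (hxy : shear u v x = y) (hdet : det2 x y ≠ 0) :
    ∀ z, shear u v z = shear x y z := by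
  set c := det2 x (v - u) / det2 u (v - u)
  have hyx : y - x = c • (v - u) := hxy ▸ shear_sub_self u v x
  have hx : det2 x (v - u) = c * det2 u (v - u) := (div_mul_cancel₀ _ huv).symm
  have hc : c ≠ 0 := by
    rintro hc
    rw [hc, zero_smul, sub_eq_zero] at hyx
    exact hdet (hyx ▸ det2_self x)
  exact congrFun (shear_eq_of_sub_eq_smul hc hyx hx).symm
end

section
/- Under the standing assumptions on the convex quadrilateral a, b, c, d and the interior point o, one has the two inequalities Δ(c,d,a)·Δ(o,a,b) ≤ (2Δ(o,a,b) + 2Δ(o,b,c) − Δ(a,b,c))·Δ(o,d,a) and Δ(c,d,a)·Δ(o,b,c) ≤ (2Δ(o,a,b) + 2Δ(o,b,c) − Δ(a,b,c))·Δ(o,c,d). -/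
/-- The area `Δ(p,q,r) = |det(q−p, r−p)|/2` of the triangle with vertices `p, q, r`. -/
noncomputable def tri (p q r : ℝ × ℝ) : ℝ := |det2 (q - p) (r - p)| / 2

noncomputable def signedArea (p q r : ℝ × ℝ) : ℝ := det2 (q - p) (r - p) / 2

lemma tri_eq_abs_signedArea (p q r : ℝ × ℝ) : tri p q r = |signedArea p q r| := by
  rw [tri, signedArea, abs_div, abs_two]

lemma tri_eq_signedArea_of_pos {p q r : ℝ × ℝ} (h : 0 < signedArea p q r) :
    tri p q r = signedArea p q r := by
  rw [tri_eq_abs_signedArea, abs_of_pos h]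

lemma signedArea_rotate (p q r : ℝ × ℝ) : signedArea p q r = signedArea q r p := by
  simp only [signedArea, det2, Prod.fst_sub, Prod.snd_sub]; ring

lemma signedArea_swap (o p q : ℝ × ℝ) : signedArea o p q = -signedArea o q p := by
  simp only [signedArea, det2, Prod.fst_sub, Prod.snd_sub]; ring

lemma signedArea_eq_add (o p q r : ℝ × ℝ) :
    signedArea p q r = signedArea o p q + signedArea o q r + signedArea o r p := by
  simp only [signedArea, det2, Prod.fst_sub, Prod.snd_sub]; ring

lemma signedArea_mul_signedArea (o a b c d : ℝ × ℝ) :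
    signedArea o c a * signedArea o b d =
      signedArea o b c * signedArea o d a - signedArea o a b * signedArea o c d := by
  simp only [signedArea, det2, Prod.fst_sub, Prod.snd_sub]; ring

section Quadrilateral

variable (o a b c d : ℝ × ℝ)

lemma signedArea_mul_add_signedArea_mul_eq_left :
    signedArea c d a * signedArea o a b +
        signedArea o c a * (signedArea a b d - 2 * signedArea o d a) =
      (2 * signedArea o a b + 2 * signedArea o b c - signedArea a b c) * signedArea o d a := by
  linear_combination signedArea o a b * signedArea_eq_add o c d a +
    signedArea o a b * signedArea_swap o a c + signedArea o d a * signedArea_eq_add o a b c +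
    signedArea o c a * signedArea_eq_add o a b d + signedArea_mul_signedArea o a b c d

lemma signedArea_mul_add_signedArea_mul_eq_right :
    signedArea c d a * signedArea o b c +
        signedArea o c a * (signedArea b c d - 2 * signedArea o c d) =
      (2 * signedArea o a b + 2 * signedArea o b c - signedArea a b c) * signedArea o c d := by
  linear_combination signedArea o b c * signedArea_eq_add o c d a +
    signedArea o b c * signedArea_swap o a c + signedArea o c d * signedArea_eq_add o a b c +
    signedArea o c a * signedArea_eq_add o b c d + signedArea o c a * signedArea_swap o d b -
    signedArea_mul_signedArea o a b c d

end Quadrilateral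

theorem stmt_4_general (a b c d o : ℝ × ℝ)
    (hc1 : 0 < det2 (b - a) (c - a)) (hc2 : 0 < det2 (c - b) (d - b))
    (hc3 : 0 < det2 (d - c) (a - c)) (hc4 : 0 < det2 (a - d) (b - d))
    (ho1 : 0 < det2 (b - a) (o - a)) (ho2 : 0 < det2 (c - b) (o - b))
    (ho3 : 0 < det2 (d - c) (o - c)) (ho4 : 0 < det2 (a - d) (o - d))
    (hf1 : 2 * tri o a b ≤ tri a b c) (hf2 : 2 * tri o b c ≤ tri a b c)
    (hf3 : 2 * tri o d a ≤ tri a b d) (hf4 : 2 * tri o c d ≤ tri b c d) :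
    tri c d a * tri o a b ≤ (2 * tri o a b + 2 * tri o b c - tri a b c) * tri o d a ∧
    tri c d a * tri o b c ≤ (2 * tri o a b + 2 * tri o b c - tri a b c) * tri o c d := by
  have hABC : tri a b c = signedArea a b c := tri_eq_signedArea_of_pos (half_pos hc1)
  have hBCD : tri b c d = signedArea b c d := tri_eq_signedArea_of_pos (half_pos hc2)
  have hCDA : tri c d a = signedArea c d a := tri_eq_signedArea_of_pos (half_pos hc3)
  have hABD : tri a b d = signedArea a b d := tri_eq_signedArea_of_pos <| by
    rw [signedArea_rotate, signedArea_rotate]; exact half_pos hc4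
  have hOAB : tri o a b = signedArea o a b := tri_eq_signedArea_of_pos <| by
    rw [signedArea_rotate]; exact half_pos ho1
  have hOBC : tri o b c = signedArea o b c := tri_eq_signedArea_of_pos <| by
    rw [signedArea_rotate]; exact half_pos ho2
  have hOCD : tri o c d = signedArea o c d := tri_eq_signedArea_of_pos <| by
    rw [signedArea_rotate]; exact half_pos ho3
  have hODA : tri o d a = signedArea o d a := tri_eq_signedArea_of_pos <| by
    rw [signedArea_rotate]; exact half_pos ho4
  simp only [hABC, hBCD, hCDA, hABD, hOAB, hOBC, hOCD, hODA] at hf1 hf2 hf3 hf4 ⊢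
  have hX : 0 ≤ signedArea o c a := by linarith [signedArea_eq_add o a b c]
  constructor
  · linarith [signedArea_mul_add_signedArea_mul_eq_left o a b c d,
      mul_nonneg hX (sub_nonneg.2 hf3)]
  · linarith [signedArea_mul_add_signedArea_mul_eq_right o a b c d,
      mul_nonneg hX (sub_nonneg.2 hf4)]

/-- `a b c d` is a convex quadrilateral (counterclockwise), `o` an
interior point, the vertex `d` is non-admissible, and `o` lies in the forbidden
region. -/
theorem stmt_4 (a b c d o : ℝ × ℝ)
    (hc1 : 0 < det2 (b - a) (c - a)) (hc2 : 0 < det2 (c - b) (d - b))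
    (hc3 : 0 < det2 (d - c) (a - c)) (hc4 : 0 < det2 (a - d) (b - d))
    (ho1 : 0 < det2 (b - a) (o - a)) (ho2 : 0 < det2 (c - b) (o - b))
    (ho3 : 0 < det2 (d - c) (o - c)) (ho4 : 0 < det2 (a - d) (o - d))
    (hna1 : tri a b d ≤ tri a b c) (hna2 : tri b c d ≤ tri a b c)
    (hf1 : 2 * tri o a b ≤ tri a b c) (hf2 : 2 * tri o b c ≤ tri a b c)
    (hf3 : 2 * tri o d a ≤ tri a b d) (hf4 : 2 * tri o c d ≤ tri b c d) :
    tri c d a * tri o a b ≤ (2 * tri o a b + 2 * tri o b c - tri a b c) * tri o d a ∧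
    tri c d a * tri o b c ≤ (2 * tri o a b + 2 * tri o b c - tri a b c) * tri o c d :=
  stmt_4_general a b c d o hc1 hc2 hc3 hc4 ho1 ho2 ho3 ho4 hf1 hf2 hf3 hf4
end

section
/- Under the standing assumptions on the convex quadrilateral a, b, c, d and the interior point o, one has Δ(b,c,d)·(Δ(a,b,c)² − 4·Δ(o,b,c)·Δ(o,a,b)) ≤ 2·Δ(a,b,c)²·Δ(o,c,d). (Equivalently, whenever Δ(a,b,c)² > 4Δ(o,b,c)Δ(o,a,b), the ratio Δ(b,c,d)/Δ(o,c,d) is at most 1/(1/2 − 2Δ(o,b,c)Δ(o,a,b)/Δ(a,b,c)²).) -/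
lemma signedArea_pos {p q r : ℝ × ℝ} (h : 0 < det2 (q - p) (r - p)) :
    0 < signedArea p q r :=
  div_pos h two_pos

lemma tri_eq_signedArea {p q r : ℝ × ℝ} (h : 0 < det2 (q - p) (r - p)) :
    tri p q r = signedArea p q r := by
  rw [tri, abs_of_pos h, signedArea]

lemma tri_rotate (p q r : ℝ × ℝ) : tri p q r = tri q r p := by
  simp only [tri, det2, Prod.fst_sub, Prod.snd_sub]
  ring_nf

lemma signedArea_mul_signedArea_eq (a b c d o : ℝ × ℝ) :
    signedArea a b c * signedArea c d o =
      signedArea b c d * (signedArea a b c - signedArea a b o) +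
        (signedArea c d a - signedArea b c d) * signedArea b c o := by
  simp only [signedArea, det2, Prod.fst_sub, Prod.snd_sub]
  ring

lemma mul_sq_sub_four_mul_le_of_eq {S Q T x y z : ℝ} (hS : 0 ≤ S) (hQ : 0 ≤ Q) (hT : 0 ≤ T)
    (hy : 0 ≤ y) (hx₂ : 2 * x ≤ S) (hy₂ : 2 * y ≤ S)
    (h : S * z = Q * (S - x) + (T - Q) * y) :
    Q * (S ^ 2 - 4 * (y * x)) ≤ 2 * S ^ 2 * z := by
  have key : 2 * S ^ 2 * z - Q * (S ^ 2 - 4 * (y * x)) =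
      Q * (S - 2 * x) * (S - 2 * y) + 2 * S * T * y := by
    linear_combination 2 * S * h
  have : 0 ≤ Q * (S - 2 * x) * (S - 2 * y) + 2 * S * T * y := by
    have := sub_nonneg.2 hx₂
    have := sub_nonneg.2 hy₂
    positivity
  linarith

theorem stmt_7_general (a b c d o : ℝ × ℝ)
    (hc1 : 0 < det2 (b - a) (c - a)) (hc2 : 0 < det2 (c - b) (d - b))
    (hc3 : 0 < det2 (d - c) (a - c))
    (ho1 : 0 < det2 (b - a) (o - a)) (ho2 : 0 < det2 (c - b) (o - b))
    (ho3 : 0 < det2 (d - c) (o - c))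
    (hf1 : 2 * tri o a b ≤ tri a b c) (hf2 : 2 * tri o b c ≤ tri a b c) :
    tri b c d * (tri a b c ^ 2 - 4 * (tri o b c * tri o a b)) ≤ 2 * tri a b c ^ 2 * tri o c d := by
  have hx : tri o a b = signedArea a b o := by rw [tri_rotate]; exact tri_eq_signedArea ho1
  have hy : tri o b c = signedArea b c o := by rw [tri_rotate]; exact tri_eq_signedArea ho2
  have hz : tri o c d = signedArea c d o := by rw [tri_rotate]; exact tri_eq_signedArea ho3
  simp only [tri_eq_signedArea hc1, tri_eq_signedArea hc2, hx, hy, hz] at hf1 hf2 ⊢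
  exact mul_sq_sub_four_mul_le_of_eq (signedArea_pos hc1).le (signedArea_pos hc2).le
    (signedArea_pos hc3).le (signedArea_pos ho2).le hf1 hf2
    (signedArea_mul_signedArea_eq a b c d o)

/-- `a b c d` is a convex quadrilateral (counterclockwise), `o` an
interior point, the vertex `d` is non-admissible, and `o` lies in the forbidden
region. -/
theorem stmt_7 (a b c d o : ℝ × ℝ)
    (hc1 : 0 < det2 (b - a) (c - a)) (hc2 : 0 < det2 (c - b) (d - b))
    (hc3 : 0 < det2 (d - c) (a - c)) (hc4 : 0 < det2 (a - d) (b - d))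
    (ho1 : 0 < det2 (b - a) (o - a)) (ho2 : 0 < det2 (c - b) (o - b))
    (ho3 : 0 < det2 (d - c) (o - c)) (ho4 : 0 < det2 (a - d) (o - d))
    (hna1 : tri a b d ≤ tri a b c) (hna2 : tri b c d ≤ tri a b c)
    (hf1 : 2 * tri o a b ≤ tri a b c) (hf2 : 2 * tri o b c ≤ tri a b c)
    (hf3 : 2 * tri o d a ≤ tri a b d) (hf4 : 2 * tri o c d ≤ tri b c d) :
    tri b c d * (tri a b c ^ 2 - 4 * (tri o b c * tri o a b)) ≤ 2 * tri a b c ^ 2 * tri o c d :=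
  stmt_7_general a b c d o hc1 hc2 hc3 ho1 ho2 ho3 hf1 hf2
end

section
/- Let x, y, z be positive real numbers satisfying x² + y² + z² = x·y·z. Then x > 2, and moreover y ≥ 2x/√(x² − 4) and z ≥ 2x/√(x² − 4). -/
/-!
Since `y² + z² ≥ 2yz`, the equation gives `x² ≤ yz (x - 2)`, forcing `x > 2`. Read as a quadratic
in `z`, the equation has the real root `z`, so its discriminant `x²y² - 4(x² + y²)` is
nonnegative, i.e. `y² (x² - 4) ≥ 4x²`; symmetrically for `z`.
-/

theorem two_lt_of_sq_add_sq_add_sq_eq_mul {x y z : ℝ} (hx : 0 < x) (hy : 0 < y) (hz : 0 < z)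
    (h : x ^ 2 + y ^ 2 + z ^ 2 = x * y * z) : 2 < x := by
  have hbound : x ^ 2 ≤ y * z * (x - 2) := by nlinarith [sq_nonneg (y - z)]
  by_contra! hle
  nlinarith [mul_nonneg (mul_pos hy hz).le (sub_nonneg.mpr hle)]

theorem four_mul_sq_le_of_sq_add_sq_add_sq_eq_mul {x y z : ℝ}
    (h : x ^ 2 + y ^ 2 + z ^ 2 = x * y * z) : 4 * x ^ 2 ≤ y ^ 2 * (x ^ 2 - 4) := by
  have hdisc : (2 * z - x * y) ^ 2 = y ^ 2 * (x ^ 2 - 4) - 4 * x ^ 2 := by linear_combination 4 * h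
  exact sub_nonneg.mp (hdisc ▸ sq_nonneg _)

theorem div_sqrt_le_of_sq_le_sq_mul {a b c : ℝ} (hb : 0 ≤ b) (hc : 0 < c)
    (h : a ^ 2 ≤ b ^ 2 * c) : a / Real.sqrt c ≤ b := by
  rw [div_le_iff₀ (Real.sqrt_pos.mpr hc)]
  apply abs_le_of_sq_le_sq' _ (mul_nonneg hb (Real.sqrt_nonneg c)) |>.2
  rwa [mul_pow, Real.sq_sqrt hc.le]

/-- if `x, y, z > 0` satisfy `x² + y² + z² = xyz`, then `x > 2` and
`y, z ≥ 2x/√(x² − 4)`. -/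
theorem stmt_10 (x y z : ℝ) (hx : 0 < x) (hy : 0 < y) (hz : 0 < z)
    (h : x ^ 2 + y ^ 2 + z ^ 2 = x * y * z) :
    2 < x ∧ 2 * x / Real.sqrt (x ^ 2 - 4) ≤ y ∧ 2 * x / Real.sqrt (x ^ 2 - 4) ≤ z := by
  have hx2 : 2 < x := two_lt_of_sq_add_sq_add_sq_eq_mul hx hy hz h
  have hpos : 0 < x ^ 2 - 4 := by nlinarith
  have h_swap : x ^ 2 + z ^ 2 + y ^ 2 = x * z * y := by linear_combination h
  refine ⟨hx2, ?_, ?_⟩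
  · exact div_sqrt_le_of_sq_le_sq_mul hy.le hpos
      (by linear_combination four_mul_sq_le_of_sq_add_sq_add_sq_eq_mul h)
  · exact div_sqrt_le_of_sq_le_sq_mul hz.le hpos
      (by linear_combination four_mul_sq_le_of_sq_add_sq_add_sq_eq_mul h_swap)
end

section
/- Let r_E and r_G be positive real numbers, let a, b, c, α be integers with a ≥ 1, b ≥ 1, c ≥ 1, α ≥ 1, and set r_F = (a·r_G + b·r_E)/(α·a·b + c). Then r_F ≤ max(r_E, r_G), and equality holds if and only if all of the following hold: r_E = r_G, α = 1, c = 1, and (a = 1 or b = 1). -/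
/-!
Put `D = α a b + c` and `M = max r_E r_G`. The slack
`D - (a + b) = (α - 1) a b + (a - 1)(b - 1) + (c - 1)` is a sum of nonnegative terms, so
`a r_G + b r_E ≤ (a + b) M ≤ D M`. Equality forces both inequalities to be equalities:
`r_E = r_G = M`, and (as `M > 0`) every slack term vanishes.
-/

section StrictOrderedRing

variable {R : Type*} [CommRing R] [LinearOrder R] [IsStrictOrderedRing R]

theorem add_le_mul_mul_add {a b c α : R} (ha : 1 ≤ a) (hb : 1 ≤ b) (hc : 1 ≤ c) (hα : 1 ≤ α) :
    a + b ≤ α * a * b + c := by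
  nlinarith [mul_nonneg (mul_nonneg (sub_nonneg.2 hα) (zero_le_one.trans ha))
      (zero_le_one.trans hb), mul_nonneg (sub_nonneg.2 ha) (sub_nonneg.2 hb)]

theorem mul_mul_add_eq_add_iff {a b c α : R} (ha : 1 ≤ a) (hb : 1 ≤ b) (hc : 1 ≤ c)
    (hα : 1 ≤ α) : α * a * b + c = a + b ↔ α = 1 ∧ c = 1 ∧ (a = 1 ∨ b = 1) := by
  have hab : 1 ≤ a * b := one_le_mul_of_one_le_of_one_le ha hb
  have hslack : α * a * b + c - (a + b) = (α - 1) * (a * b) + (a - 1) * (b - 1) + (c - 1) := by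
    ring
  have h₁ : 0 ≤ (α - 1) * (a * b) := mul_nonneg (sub_nonneg.2 hα) (zero_le_one.trans hab)
  have h₂ : 0 ≤ (a - 1) * (b - 1) := mul_nonneg (sub_nonneg.2 ha) (sub_nonneg.2 hb)
  constructor
  · intro h
    rw [h, sub_self] at hslack
    have hα' : (α - 1) * (a * b) = 0 := by linarith
    have hab' : (a - 1) * (b - 1) = 0 := by linarith
    refine ⟨?_, by linarith, ?_⟩
    · rcases mul_eq_zero.1 hα' with h | h
      · exact sub_eq_zero.1 h
      · linarith
    · rcases mul_eq_zero.1 hab' with h | h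
      · exact Or.inl (sub_eq_zero.1 h)
      · exact Or.inr (sub_eq_zero.1 h)
  · rintro ⟨rfl, rfl, rfl | rfl⟩ <;> ring

theorem mul_add_mul_le_mul {p q D x y M : R} (hp : 0 ≤ p) (hq : 0 ≤ q) (hD : p + q ≤ D)
    (hx : x ≤ M) (hy : y ≤ M) (hM : 0 ≤ M) : p * x + q * y ≤ M * D := by
  nlinarith [mul_le_mul_of_nonneg_left hx hp, mul_le_mul_of_nonneg_left hy hq,
    mul_le_mul_of_nonneg_left hD hM]

theorem mul_add_mul_eq_mul_iff {p q D x y M : R} (hp : 0 < p) (hq : 0 < q) (hD : p + q ≤ D)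
    (hx : x ≤ M) (hy : y ≤ M) (hM : 0 < M) :
    p * x + q * y = M * D ↔ x = M ∧ y = M ∧ D = p + q := by
  constructor
  · intro h
    have hsum : p * (M - x) + q * (M - y) + M * (D - (p + q)) = 0 := by linear_combination -h
    have h₁ : 0 ≤ p * (M - x) := mul_nonneg hp.le (sub_nonneg.2 hx)
    have h₂ : 0 ≤ q * (M - y) := mul_nonneg hq.le (sub_nonneg.2 hy)
    have h₃ : 0 ≤ M * (D - (p + q)) := mul_nonneg hM.le (sub_nonneg.2 hD)
    refine ⟨?_, ?_, ?_⟩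
    · nlinarith
    · nlinarith
    · nlinarith
  · rintro ⟨rfl, rfl, rfl⟩
    ring

end StrictOrderedRing

theorem eq_max_and_eq_max_iff {α : Type*} [LinearOrder α] {x y : α} :
    y = max x y ∧ x = max x y ↔ x = y := by
  constructor
  · rintro ⟨hy, hx⟩
    exact hx.trans hy.symm
  · rintro rfl
    simp

theorem stmt_12_general (rE rG : ℝ) (hrE : 0 < rE)
    (a b c α : ℤ) (ha : 1 ≤ a) (hb : 1 ≤ b) (hc : 1 ≤ c) (hα : 1 ≤ α)
    (rF : ℝ) (hrF : rF = ((a : ℝ) * rG + (b : ℝ) * rE) / ((α : ℝ) * a * b + c)) :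
    rF ≤ max rE rG ∧
    (rF = max rE rG ↔ rE = rG ∧ α = 1 ∧ c = 1 ∧ (a = 1 ∨ b = 1)) := by
  have ha' : (1 : ℝ) ≤ a := by exact_mod_cast ha
  have hb' : (1 : ℝ) ≤ b := by exact_mod_cast hb
  have hslack : (a : ℝ) + b ≤ α * a * b + c :=
    add_le_mul_mul_add ha' hb' (by exact_mod_cast hc) (by exact_mod_cast hα)
  have hD : (0 : ℝ) < α * a * b + c := by linarith
  have hM : 0 < max rE rG := lt_max_of_lt_left hrE
  subst hrF
  refine ⟨(div_le_iff₀ hD).2 ?_, ?_⟩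
  · exact mul_add_mul_le_mul (by linarith) (by linarith) hslack (le_max_right _ _)
      (le_max_left _ _) hM.le
  · rw [div_eq_iff hD.ne', mul_add_mul_eq_mul_iff (by linarith) (by linarith) hslack
      (le_max_right _ _) (le_max_left _ _) hM, ← and_assoc, eq_max_and_eq_max_iff,
      ← mul_mul_add_eq_add_iff ha hb hc hα]
    norm_cast

/-- for positive reals `r_E, r_G`, integers `a, b, c, α ≥ 1` and
`r_F = (a·r_G + b·r_E)/(α·a·b + c)`, one has `r_F ≤ max(r_E, r_G)`, with equality
iff `r_E = r_G`, `α = 1`, `c = 1` and (`a = 1` or `b = 1`). -/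
theorem stmt_12 (rE rG : ℝ) (hrE : 0 < rE) (hrG : 0 < rG)
    (a b c α : ℤ) (ha : 1 ≤ a) (hb : 1 ≤ b) (hc : 1 ≤ c) (hα : 1 ≤ α)
    (rF : ℝ) (hrF : rF = ((a : ℝ) * rG + (b : ℝ) * rE) / ((α : ℝ) * a * b + c)) :
    rF ≤ max rE rG ∧
    (rF = max rE rG ↔ rE = rG ∧ α = 1 ∧ c = 1 ∧ (a = 1 ∨ b = 1)) :=
  stmt_12_general rE rG hrE a b c α ha hb hc hα rF hrF
end

section
/- Let B be the symmetric bilinear form on ℤ³ given by B((a,b,c), (a′,b′,c′)) = a·a′ − b·b′ − c·c′, and let K = (−3, 1, 1). If f : ℤ³ → ℤ³ is a ℤ-linear automorphism with B(f(x), f(y)) = B(x, y) for all x, y ∈ ℤ³ and f(K) = K, then f is either the identity or the map (a, b, c) ↦ (a, c, b). In particular, the subgroup of the orthogonal group of B stabilizing K has exactly two elements. -/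
/-!
An isometry `f` fixing `K` fixes the line class `H = (1, 0, 0)`: writing `f H = (a, b, c)`, the
conditions `f H · f H = 1` and `f H · K = -3` give `b + c = 3 - 3a` and `b² + c² = a² - 1`, and
`2 (b² + c²) ≥ (b + c)²` forces `a = 1`, `b = c = 0`. The same kind of computation shows that
`E₁` and `E₂` are the only classes `e` with `e · H = 0`, `e² = -1` and `e · K = -1`, so `f`
permutes `{E₁, E₂}` and, being determined by its values on the basis, is the identity or the
reflection swapping `E₁` and `E₂`.
-/

/-- The intersection form of `Bl₂(ℙ²)` in the basis `(H, E₁, E₂)`: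
`B((a,b,c),(a′,b′,c′)) = aa′ − bb′ − cc′`. -/
def bform3 (x y : ℤ × ℤ × ℤ) : ℤ := x.1 * y.1 - x.2.1 * y.2.1 - x.2.2 * y.2.2

theorem LinearMap.ext_prod_prod {R M : Type*} [Semiring R] [AddCommMonoid M] [Module R M]
    {f g : R × R × R →ₗ[R] M} (h₁ : f (1, 0, 0) = g (1, 0, 0))
    (h₂ : f (0, 1, 0) = g (0, 1, 0)) (h₃ : f (0, 0, 1) = g (0, 0, 1)) : f = g :=
  prod_ext (ext_ring h₁) (prod_ext (ext_ring h₂) (ext_ring h₃))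

namespace Bl2

def lineClass : ℤ × ℤ × ℤ := (1, 0, 0)

def exceptionalClass₁ : ℤ × ℤ × ℤ := (0, 1, 0)

def exceptionalClass₂ : ℤ × ℤ × ℤ := (0, 0, 1)

def canonicalClass : ℤ × ℤ × ℤ := (-3, 1, 1)

/-- The reflection in the root `E₁ - E₂`. -/
def swap : (ℤ × ℤ × ℤ) ≃ₗ[ℤ] (ℤ × ℤ × ℤ) :=
  (LinearEquiv.refl ℤ ℤ).prodCongr (LinearEquiv.prodComm ℤ ℤ ℤ)

theorem bform3_swap (x y : ℤ × ℤ × ℤ) : bform3 (swap x) (swap y) = bform3 x y := by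
  simp only [bform3, swap, LinearEquiv.prodCongr_apply, LinearEquiv.refl_apply,
    LinearEquiv.prodComm_apply, Prod.fst_swap, Prod.snd_swap]
  ring

theorem eq_lineClass_of_bform3 {v : ℤ × ℤ × ℤ} (hv : bform3 v v = 1)
    (hK : bform3 v canonicalClass = -3) : v = lineClass := by
  obtain ⟨a, b, c⟩ := v
  simp only [bform3, canonicalClass] at hv hK
  have ha : a = 1 := by nlinarith [sq_nonneg (b - c), sq_nonneg (7 * a - 11)]
  subst ha
  have hb : b = 0 := by nlinarith [sq_nonneg b, sq_nonneg c]
  have hc : c = 0 := by nlinarith [sq_nonneg b, sq_nonneg c]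
  rw [hb, hc, lineClass]

theorem eq_exceptionalClass_of_bform3 {v : ℤ × ℤ × ℤ} (hH : bform3 v lineClass = 0)
    (hv : bform3 v v = -1) (hK : bform3 v canonicalClass = -1) :
    v = exceptionalClass₁ ∨ v = exceptionalClass₂ := by
  obtain ⟨a, b, c⟩ := v
  simp only [bform3, lineClass, canonicalClass] at hH hv hK
  have ha : a = 0 := by linarith
  subst ha
  have hbc : b * c = 0 := by nlinarith
  rcases mul_eq_zero.mp hbc with hb | hc
  · right
    rw [hb, show c = 1 by linarith, exceptionalClass₂]
  · left
    rw [hc, show b = 1 by linarith, exceptionalClass₁]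

section Isometry

variable {f : ℤ × ℤ × ℤ → ℤ × ℤ × ℤ} (hB : ∀ x y, bform3 (f x) (f y) = bform3 x y)
  (hK : f canonicalClass = canonicalClass)
include hB hK

theorem map_lineClass : f lineClass = lineClass :=
  eq_lineClass_of_bform3 (by rw [hB]; rfl) (by rw [← hK, hB]; rfl)

theorem map_exceptionalClass {e : ℤ × ℤ × ℤ} (hH : bform3 e lineClass = 0)
    (he : bform3 e e = -1) (heK : bform3 e canonicalClass = -1) :
    f e = exceptionalClass₁ ∨ f e = exceptionalClass₂ :=
  eq_exceptionalClass_of_bform3 (by rw [← map_lineClass hB hK, hB, hH])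
    (by rw [hB, he]) (by rw [← hK, hB, heK])

end Isometry

theorem eq_refl_or_eq_swap {f : (ℤ × ℤ × ℤ) ≃ₗ[ℤ] (ℤ × ℤ × ℤ)}
    (hB : ∀ x y, bform3 (f x) (f y) = bform3 x y) (hK : f canonicalClass = canonicalClass) :
    f = LinearEquiv.refl ℤ _ ∨ f = swap := by
  have hH : f lineClass = lineClass := map_lineClass hB hK
  have h₁ := map_exceptionalClass hB hK (e := exceptionalClass₁) rfl rfl rfl
  have h₂ := map_exceptionalClass hB hK (e := exceptionalClass₂) rfl rfl rfl
  have hne : f exceptionalClass₁ ≠ f exceptionalClass₂ := f.injective.ne (by decide)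
  rcases h₁ with h₁ | h₁ <;> rcases h₂ with h₂ | h₂
  · exact absurd (h₁.trans h₂.symm) hne
  · exact .inl (LinearEquiv.toLinearMap_injective (LinearMap.ext_prod_prod hH h₁ h₂))
  · exact .inr (LinearEquiv.toLinearMap_injective (LinearMap.ext_prod_prod hH h₁ h₂))
  · exact absurd (h₁.trans h₂.symm) hne

end Bl2

open Bl2 in
/-- a `ℤ`-linear automorphism of `ℤ³` preserving the form
`aa′ − bb′ − cc′` and fixing `K = (−3, 1, 1)` is the identity or the swap
`(a, b, c) ↦ (a, c, b)`; in particular the stabilizer of `K` in the orthogonal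
group of the form has exactly two elements. -/
theorem stmt_16 (f : (ℤ × ℤ × ℤ) ≃ₗ[ℤ] (ℤ × ℤ × ℤ))
    (hB : ∀ x y : ℤ × ℤ × ℤ, bform3 (f x) (f y) = bform3 x y)
    (hK : f (-3, 1, 1) = (-3, 1, 1)) :
    ((∀ x : ℤ × ℤ × ℤ, f x = x) ∨ (∀ x : ℤ × ℤ × ℤ, f x = (x.1, x.2.2, x.2.1))) ∧
    Nat.card {g : (ℤ × ℤ × ℤ) ≃ₗ[ℤ] (ℤ × ℤ × ℤ) //
      (∀ x y : ℤ × ℤ × ℤ, bform3 (g x) (g y) = bform3 x y) ∧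
        g (-3, 1, 1) = (-3, 1, 1)} = 2 := by
  refine ⟨?_, (Nat.card_eq_two_iff' ⟨LinearEquiv.refl ℤ _, fun _ _ ↦ rfl, rfl⟩).mpr
    ⟨⟨swap, bform3_swap, rfl⟩, ?_, ?_⟩⟩
  · rcases eq_refl_or_eq_swap hB hK with rfl | rfl
    exacts [.inl fun _ ↦ rfl, .inr fun _ ↦ rfl]
  · exact fun h ↦ absurd (congrArg (fun g ↦ g.1 exceptionalClass₁) h) (by decide)
  · rintro ⟨g, hgB, hgK⟩ hg
    rcases eq_refl_or_eq_swap hgB hgK with rfl | rfl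
    exacts [absurd rfl hg, rfl]
end
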